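/- arXiv:1905.02167 — 5 statements merged into one kernel-verified Lean document; each statement's English description precedes it below -/
import Mathlib

section
/- Let Γ be a finite graph (possibly with loops) with nonempty vertex set, let c be a positive integer, and let Ψ be a suited proper c-coloring of the exponential graph E_c(Γ). Then for every vertex φ of E_c(Γ), the color Ψ(φ) belongs to the image of the mapping φ. -/
/-- The exponential graph `E_c(Γ)` of a graph `Γ` (possibly with loops), given by a
symmetric adjacency relation `E` on the vertex set `V`. -/
def expGraph {V : Type} (E : V → V → Prop) (hE : Symmetric E) (c : ℕ) :
    SimpleGraph (V → Fin c) where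
  Adj φ ψ := φ ≠ ψ ∧ ∀ x y, E x y → φ x ≠ ψ y
  symm := by
    constructor
    rintro φ ψ ⟨hne, h⟩
    exact ⟨hne.symm, fun x y hxy heq => h y x (hE hxy) heq.symm⟩
  loopless := ⟨fun φ h => h.1 rfl⟩

/-- If `Ψ` is a suited proper `c`-coloring of `E_c(Γ)` (i.e. every constant mapping with
value `i` receives color `i`), then for every vertex `φ` of `E_c(Γ)` the color `Ψ φ`
belongs to the image of `φ`. -/
theorem suited_coloring_mem_range {V : Type} [Fintype V] [Nonempty V]
    (E : V → V → Prop) (hE : Symmetric E) (c : ℕ) (hc : 0 < c)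
    (Ψ : (expGraph E hE c).Coloring (Fin c))
    (hsuited : ∀ i : Fin c, Ψ (Function.const V i) = i)
    (φ : V → Fin c) :
    Ψ φ ∈ Set.range φ := by
  by_contra h
  have hne : ∀ x, φ x ≠ Ψ φ := fun x hx => h ⟨x, hx⟩
  have hadj : (expGraph E hE c).Adj φ (Function.const V (Ψ φ)) := by
    refine ⟨fun hEq => ?_, fun x y _ => hne x⟩
    obtain ⟨v⟩ := ‹Nonempty V›
    exact hne v (congrFun hEq v)
  exact Ψ.valid hadj (by rw [hsuited (Ψ φ)])
end

section
/- Let Γ be a finite graph (possibly with loops) with |V(Γ)| = n, let c be a positive integer, and let Ψ be a suited proper c-coloring of the exponential graph E_c(Γ). Fix a vertex u ∈ V(Γ) and a color b, and suppose the class I(u,b) is large, i.e., |I(u,b)| > n²·c^{n−2}. Then the color class Ψ^{-1}(b) is u-robust: for every mapping φ with Ψ(φ) = b there exists a vertex w in the closed neighborhood N(u) of u in Γ such that φ(w) = b. -/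
/-- The class `I(u,b)` is *large* if it has more than `n² · c^(n-2)` elements, where
`I(u,b)` is the set of mappings `φ` with `Ψ φ = b` and `φ u = b`. -/
def IsLarge {V : Type} (n c : ℕ) (Ψ : (V → Fin c) → Fin c) (u : V) (b : Fin c) : Prop :=
  n ^ 2 * c ^ (n - 2) < Nat.card {φ : V → Fin c // Ψ φ = b ∧ φ u = b}

/-- If `Ψ` is a suited proper `c`-coloring of `E_c(Γ)`, `|V(Γ)| = n`, and the class
`I(u,b)` is large, then the color class `Ψ⁻¹(b)` is `u`-robust: every `φ` with
`Ψ φ = b` takes the value `b` somewhere on the closed neighborhood of `u`. -/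
theorem large_class_robust {V : Type} [Fintype V] [Nonempty V]
    (E : V → V → Prop) (hE : Symmetric E) (n c : ℕ)
    (hn : Fintype.card V = n) (hc : 0 < c)
    (Ψ : (expGraph E hE c).Coloring (Fin c))
    (hsuited : ∀ i : Fin c, Ψ (Function.const V i) = i)
    (u : V) (b : Fin c)
    (hlarge : IsLarge n c (fun φ => Ψ φ) u b) :
    ∀ φ : V → Fin c, Ψ φ = b → ∃ w, (w = u ∨ E u w) ∧ φ w = b := by
  classical
  intro φ hφ
  by_contra hcon
  push_neg at hcon
  have hu : φ u ≠ b := hcon u (Or.inl rfl)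
  set S : Finset (V → Fin c) := Finset.univ.filter (fun ψ => Ψ ψ = b ∧ ψ u = b) with hS
  have hcard : Nat.card {ψ : V → Fin c // Ψ ψ = b ∧ ψ u = b} = S.card := by
    rw [Nat.card_eq_fintype_card, Fintype.card_subtype]
  have hlarge' : n ^ 2 * c ^ (n - 2) < S.card := by
    have h : n ^ 2 * c ^ (n - 2) < Nat.card {ψ : V → Fin c // Ψ ψ = b ∧ ψ u = b} := hlarge
    rwa [hcard] at h
  -- witness pairs
  have hwit : ∀ ψ ∈ S, ∃ p : V × V, E p.1 p.2 ∧ ψ p.1 = φ p.2 ∧ p.1 ≠ u := by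
    intro ψ hψ
    have hψ' := Finset.mem_filter.mp hψ
    obtain ⟨hΨψ, hψu⟩ := hψ'.2
    have hne : ψ ≠ φ := by
      intro h
      exact hu (by rw [← h]; exact hψu)
    have hnadj : ¬ (expGraph E hE c).Adj ψ φ := by
      intro hadj
      exact (Ψ.valid hadj) (by rw [hΨψ, hφ])
    have hnadj' : ¬ (ψ ≠ φ ∧ ∀ x y, E x y → ψ x ≠ φ y) := hnadj
    push_neg at hnadj'
    obtain ⟨x, y, hExy, hxy⟩ := hnadj' hne
    refine ⟨(x, y), hExy, hxy, ?_⟩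
    intro hxu
    subst hxu
    exact hcon y (Or.inr hExy) (by rw [← hxy]; exact hψu)
  choose! W hW1 hW2 hW3 using hwit
  have hsum : S.card = ∑ p ∈ (Finset.univ : Finset (V × V)),
      (S.filter (fun ψ => W ψ = p)).card :=
    Finset.card_eq_sum_card_fiberwise (fun ψ _ => Finset.mem_univ _)
  have hfib : ∀ p : V × V, (S.filter (fun ψ => W ψ = p)).card ≤ c ^ (n - 2) := by
    intro p
    rcases (S.filter (fun ψ => W ψ = p)).eq_empty_or_nonempty with h | ⟨ψ0, hψ0⟩
    · simp [h]
    · obtain ⟨hψ0S, hψ0W⟩ := Finset.mem_filter.mp hψ0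
      obtain ⟨x, y⟩ := p
      have hx : (W ψ0).1 = x := by rw [hψ0W]
      have hxu : x ≠ u := hx ▸ hW3 ψ0 hψ0S
      -- every ψ in the fiber satisfies ψ u = b and ψ x = φ y
      have hval : ∀ ψ ∈ S.filter (fun ψ => W ψ = (x, y)), ψ u = b ∧ ψ x = φ y := by
        intro ψ hψ
        obtain ⟨hψS, hψW⟩ := Finset.mem_filter.mp hψ
        refine ⟨(Finset.mem_filter.mp hψS).2.2, ?_⟩
        have := hW2 ψ hψS
        rw [hψW] at this
        exact this
      have hinj : Set.InjOn (fun (ψ : V → Fin c) (v : {v : V // v ≠ u ∧ v ≠ x}) => ψ v.1)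
          ↑(S.filter (fun ψ => W ψ = (x, y))) := by
        intro ψ1 h1 ψ2 h2 heq
        have h1' := hval ψ1 h1
        have h2' := hval ψ2 h2
        funext v
        by_cases hv1 : v = u
        · rw [hv1, h1'.1, h2'.1]
        · by_cases hv2 : v = x
          · rw [hv2, h1'.2, h2'.2]
          · exact congrFun heq ⟨v, hv1, hv2⟩
      have hle : (S.filter (fun ψ => W ψ = (x, y))).card ≤
          Fintype.card ({v : V // v ≠ u ∧ v ≠ x} → Fin c) := by
        rw [← Finset.card_univ]
        exact Finset.card_le_card_of_injOn _ (fun _ _ => Finset.mem_univ _) hinj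
      have hsub : Fintype.card {v : V // v ≠ u ∧ v ≠ x} = n - 2 := by
        rw [Fintype.card_subtype]
        have : Finset.univ.filter (fun v => v ≠ u ∧ v ≠ x) =
            Finset.univ \ {u, x} := by
          ext v; simp [and_comm]
        rw [this, Finset.card_sdiff_of_subset (Finset.subset_univ _), Finset.card_univ, hn]
        have : ({u, x} : Finset V).card = 2 := by
          rw [Finset.card_insert_of_notMem (by simp [Ne.symm hxu]), Finset.card_singleton]
        rw [this]
      calc (S.filter (fun ψ => W ψ = (x, y))).card
          ≤ Fintype.card ({v : V // v ≠ u ∧ v ≠ x} → Fin c) := hle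
        _ = c ^ (n - 2) := by rw [Fintype.card_fun, Fintype.card_fin, hsub]
  have hbound : S.card ≤ n ^ 2 * c ^ (n - 2) := by
    rw [hsum]
    calc ∑ p ∈ (Finset.univ : Finset (V × V)), (S.filter (fun ψ => W ψ = p)).card
        ≤ ∑ _p ∈ (Finset.univ : Finset (V × V)), c ^ (n - 2) :=
          Finset.sum_le_sum (fun p _ => hfib p)
      _ = Fintype.card (V × V) * c ^ (n - 2) := by
          rw [Finset.sum_const, smul_eq_mul, Finset.card_univ]
      _ = n ^ 2 * c ^ (n - 2) := by rw [Fintype.card_prod, hn]; ring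
  exact absurd hlarge' (not_lt.mpr hbound)
end

section
/- Let Γ be a finite graph (possibly with loops) with |V(Γ)| = n, let c be a positive integer, and let Ψ be a suited proper c-coloring of the exponential graph E_c(Γ). Then there exists a vertex v of Γ such that at least c − (n³·c^{n−1})^{1/n} of the color classes Ψ^{-1}(b) are v-robust, meaning that for every φ with Ψ(φ) = b there exists w in the closed neighborhood N(v) of v in Γ with φ(w) = b. -/
/-- Counting lemma: if for every "section" `ψ` of the family `B` there are `v x y` with
`x ≠ v` such that `ψ x` is determined by `ψ v` (via `φf`), then the number of sections is
at most `n³ · c^(n-1)`. -/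
lemma count_aux {V : Type} [Fintype V] [Nonempty V] {c : ℕ}
    (B : V → Fin c → Prop)
    (φf : ∀ v b, B v b → (V → Fin c))
    (H : ∀ ψ : V → Fin c, ∀ hψ : (∀ v, B v (ψ v)),
      ∃ v x y, x ≠ v ∧ ψ x = φf v (ψ v) (hψ v) y) :
    ∏ v : V, Nat.card {b : Fin c // B v b} ≤
      (Fintype.card V) ^ 3 * c ^ (Fintype.card V - 1) := by
  classical
  rcases Nat.eq_zero_or_pos c with hc0 | hc
  · obtain ⟨v⟩ := ‹Nonempty V›
    have : Nat.card {b : Fin c // B v b} = 0 := by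
      subst hc0
      simp [Nat.card_eq_fintype_card]
    calc ∏ v : V, Nat.card {b : Fin c // B v b} = 0 :=
          Finset.prod_eq_zero (Finset.mem_univ v) this
      _ ≤ _ := Nat.zero_le _
  set n := Fintype.card V with hn
  let i0 : Fin c := ⟨0, hc⟩
  let S := { f : V → Fin c // ∀ v, B v (f v) }
  have hcardS : Fintype.card S = ∏ v : V, Nat.card {b : Fin c // B v b} := by
    rw [Fintype.card_congr (Equiv.subtypePiEquivPi), Fintype.card_pi]
    exact Finset.prod_congr rfl fun v _ => (Nat.card_eq_fintype_card).symm
  choose vf xf yf hne heq using fun ψ : S => H ψ.1 ψ.2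
  let T := Σ x : V, V × V × ({ w : V // w ≠ x } → Fin c)
  let F : S → T := fun ψ => ⟨xf ψ, vf ψ, yf ψ, fun w => ψ.1 w.1⟩
  let G : T → (V → Fin c) := fun p w =>
    if h : w = p.1 then
      if hv : p.2.1 = p.1 then i0
      else if hB : B p.2.1 (p.2.2.2 ⟨p.2.1, hv⟩) then
        φf p.2.1 (p.2.2.2 ⟨p.2.1, hv⟩) hB p.2.2.1
      else i0
    else p.2.2.2 ⟨w, h⟩
  have hGF : ∀ ψ : S, G (F ψ) = ψ.1 := by
    intro ψ
    funext w
    show (if h : w = xf ψ then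
        if hv : vf ψ = xf ψ then i0
        else if hB : B (vf ψ) (ψ.1 (vf ψ)) then
          φf (vf ψ) (ψ.1 (vf ψ)) hB (yf ψ) else i0
      else ψ.1 w) = ψ.1 w
    by_cases h : w = xf ψ
    · rw [dif_pos h, dif_neg (fun hh => (hne ψ) hh.symm), dif_pos (ψ.2 (vf ψ)), h]
      exact (heq ψ).symm
    · rw [dif_neg h]
  have hFinj : Function.Injective F := by
    intro a b hab
    have h2 := congrArg G hab
    rw [hGF a, hGF b] at h2
    exact Subtype.ext h2
  have hle := Fintype.card_le_of_injective F hFinj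
  have hT : Fintype.card T = n ^ 3 * c ^ (n - 1) := by
    have hsub : ∀ x : V, Fintype.card { w : V // w ≠ x } = n - 1 := by
      intro x
      have h2 : Fintype.card {w : V // ¬ (w = x)} = n - 1 := by
        rw [Fintype.card_subtype_compl, Fintype.card_subtype_eq]
      exact h2
    rw [Fintype.card_sigma]
    have : ∀ x : V, Fintype.card (V × V × ({ w : V // w ≠ x } → Fin c))
        = n * (n * c ^ (n - 1)) := by
      intro x
      rw [Fintype.card_prod, Fintype.card_prod, Fintype.card_fun, hsub x,
        Fintype.card_fin]
    rw [Finset.sum_congr rfl fun x _ => this x, Finset.sum_const, Finset.card_univ,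
      smul_eq_mul]
    ring
  calc ∏ v : V, Nat.card {b : Fin c // B v b} = Fintype.card S := hcardS.symm
    _ ≤ Fintype.card T := hle
    _ = n ^ 3 * c ^ (n - 1) := hT

/-- The robustness predicate. -/
def Rob {V : Type} {c : ℕ} (E : V → V → Prop) (Ψ : (V → Fin c) → Fin c)
    (v : V) (b : Fin c) : Prop :=
  ∀ φ : V → Fin c, Ψ φ = b → ∃ w, (w = v ∨ E v w) ∧ φ w = b

/-- If `Ψ` is a suited proper `c`-coloring of `E_c(Γ)` and `|V(Γ)| = n`, then there is a
vertex `v` of `Γ` such that at least `c − (n³·c^(n-1))^(1/n)` of the color classes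
`Ψ⁻¹(b)` are `v`-robust: every `φ` with `Ψ φ = b` takes the value `b` somewhere on the
closed neighborhood of `v`. -/
theorem exists_robust_vertex {V : Type} [Fintype V] [Nonempty V]
    (E : V → V → Prop) (hE : Symmetric E) (n c : ℕ)
    (hn : Fintype.card V = n) (hc : 0 < c)
    (Ψ : (expGraph E hE c).Coloring (Fin c))
    (hsuited : ∀ i : Fin c, Ψ (Function.const V i) = i) :
    ∃ v : V,
      (c : ℝ) - ((n : ℝ) ^ 3 * (c : ℝ) ^ (n - 1)) ^ ((1 : ℝ) / (n : ℝ)) ≤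
        (Nat.card {b : Fin c //
          ∀ φ : V → Fin c, Ψ φ = b → ∃ w, (w = v ∨ E v w) ∧ φ w = b} : ℝ) := by
  classical
  by_contra hcon
  push_neg at hcon
  have hcon2 : ∀ v : V, (Nat.card {b : Fin c // Rob E (⇑Ψ) v b} : ℝ) <
      (c : ℝ) - ((n : ℝ) ^ 3 * (c : ℝ) ^ (n - 1)) ^ ((1 : ℝ) / (n : ℝ)) :=
    fun v => hcon v
  set t : ℝ := ((n : ℝ) ^ 3 * (c : ℝ) ^ (n - 1)) ^ ((1 : ℝ) / (n : ℝ)) with ht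
  have hn0 : 0 < n := hn ▸ Fintype.card_pos
  set N : ℕ := n ^ 3 * c ^ (n - 1) with hNdef
  have hNr : ((N : ℝ)) = (n : ℝ) ^ 3 * (c : ℝ) ^ (n - 1) := by
    rw [hNdef]; push_cast; ring_nf
  have hX0 : (0 : ℝ) < (n : ℝ) ^ 3 * (c : ℝ) ^ (n - 1) := by
    apply mul_pos
    · exact pow_pos (by exact_mod_cast hn0) 3
    · exact pow_pos (by exact_mod_cast hc) (n - 1)
  have ht0 : 0 < t := Real.rpow_pos_of_pos hX0 _
  have htn : t ^ n = (N : ℝ) := by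
    rw [ht, ← Real.rpow_natCast (((n : ℝ) ^ 3 * (c : ℝ) ^ (n - 1)) ^ ((1 : ℝ) / (n : ℝ))) n,
      ← Real.rpow_mul hX0.le, one_div, inv_mul_cancel₀ (by exact_mod_cast hn0.ne'),
      Real.rpow_one, hNr]
  -- each vertex has more than t non-robust colors
  have hbig : ∀ v : V, t < (Nat.card {b : Fin c // ¬ Rob E (⇑Ψ) v b} : ℝ) := by
    intro v
    have h1 := hcon2 v
    have hR : Nat.card {b : Fin c // Rob E (⇑Ψ) v b} ≤ c := by
      rw [Nat.card_eq_fintype_card]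
      simpa using Fintype.card_subtype_le (fun b : Fin c => Rob E (⇑Ψ) v b)
    have h2 : Nat.card {b : Fin c // ¬ Rob E (⇑Ψ) v b}
        = c - Nat.card {b : Fin c // Rob E (⇑Ψ) v b} := by
      rw [Nat.card_eq_fintype_card, Nat.card_eq_fintype_card,
        Fintype.card_subtype_compl, Fintype.card_fin]
    have h3 : ((Nat.card {b : Fin c // ¬ Rob E (⇑Ψ) v b} : ℝ))
        = (c : ℝ) - (Nat.card {b : Fin c // Rob E (⇑Ψ) v b} : ℝ) := by
      rw [h2, Nat.cast_sub hR]
    rw [h3]; linarith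
  -- choose witnesses for non-robust colors
  have hwit : ∀ v b, ¬ Rob E (⇑Ψ) v b →
      ∃ φ : V → Fin c, Ψ φ = b ∧ ∀ w, (w = v ∨ E v w) → φ w ≠ b := by
    intro v b h
    unfold Rob at h
    push_neg at h
    obtain ⟨φ, h1, h2⟩ := h
    exact ⟨φ, h1, h2⟩
  choose φf hφ1 hφ2 using hwit
  -- main structural fact
  have H : ∀ ψ : V → Fin c, ∀ hψ : (∀ v, ¬ Rob E (⇑Ψ) v (ψ v)),
      ∃ v x y, x ≠ v ∧ ψ x = φf v (ψ v) (hψ v) y := by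
    intro ψ hψ
    by_cases hex : ∃ v x y, E x y ∧ ψ x = φf v (ψ v) (hψ v) y
    · obtain ⟨v, x, y, hxy, he⟩ := hex
      refine ⟨v, x, y, ?_, he⟩
      rintro rfl
      exact hφ2 x (ψ x) (hψ x) y (Or.inr hxy) he.symm
    · exfalso
      push_neg at hex
      have hnea : ∀ v, Ψ ψ ≠ ψ v := by
        intro v
        have hadj : (expGraph E hE c).Adj ψ (φf v (ψ v) (hψ v)) := by
          refine ⟨?_, fun x y hxy => hex v x y hxy⟩
          intro hEq
          exact hφ2 v (ψ v) (hψ v) v (Or.inl rfl) (by rw [← hEq])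
        have hv := Ψ.valid hadj
        rwa [hφ1 v (ψ v) (hψ v)] at hv
      have hnotadj : ¬ (expGraph E hE c).Adj ψ (Function.const V (Ψ ψ)) := by
        intro h
        exact Ψ.valid h (hsuited (Ψ ψ)).symm
      have h3 : ψ = Function.const V (Ψ ψ) ∨ ∃ x y, E x y ∧ ψ x = Ψ ψ := by
        by_contra h4
        push_neg at h4
        exact hnotadj ⟨h4.1, fun x y hxy => h4.2 x y hxy⟩
      rcases h3 with h3 | ⟨x, y, hxy, hxa⟩
      · obtain ⟨v⟩ := ‹Nonempty V›
        exact hnea v (congrFun h3 v).symm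
      · exact hnea x hxa.symm
  -- counting
  have hfin := count_aux (fun v b => ¬ Rob E (⇑Ψ) v b) φf H
  rw [hn] at hfin
  have h1 : ((∏ v : V, Nat.card {b : Fin c // ¬ Rob E (⇑Ψ) v b} : ℕ) : ℝ) ≤ (N : ℝ) :=
    Nat.cast_le.mpr hfin
  have h2 : (N : ℝ) < ((∏ v : V, Nat.card {b : Fin c // ¬ Rob E (⇑Ψ) v b} : ℕ) : ℝ) := by
    rw [Nat.cast_prod]
    calc (N : ℝ) = t ^ n := htn.symm
      _ = ∏ _v : V, t := by rw [Finset.prod_const, Finset.card_univ, hn]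
      _ < ∏ v : V, ((Nat.card {b : Fin c // ¬ Rob E (⇑Ψ) v b} : ℕ) : ℝ) :=
        Finset.prod_lt_prod_of_nonempty (fun i _ => ht0) (fun i _ => hbig i)
          Finset.univ_nonempty
  linarith
end

section
/- Let G be a finite simple graph, let q and c be positive integers, let Γ_G be the graph obtained from G by adding a loop at every vertex, and let G ⊠ K_q be the strong product. Then the mapping which sends each φ : V(G) → {1,…,c} to the mapping φ̂ : V(G)×{1,…,q} → {1,…,c} defined by φ̂(g,i) = φ(g) is an injective graph homomorphism from E_c(Γ_G) to E_c(G ⊠ K_q). Consequently, the restriction of any (suited) proper c-coloring of E_c(G ⊠ K_q) to the mappings that are constant on each clique {g} × K_q yields a (suited) proper c-coloring of E_c(Γ_G). -/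
/-- The adjacency relation of `Γ_G`, the graph obtained from a simple graph `G` by
adding a loop at every vertex. -/
def withLoops {α : Type} (G : SimpleGraph α) : α → α → Prop :=
  fun x y => G.Adj x y ∨ x = y

theorem withLoops_symm {α : Type} (G : SimpleGraph α) : Symmetric (withLoops G) :=
  fun _ _ h => h.imp (fun h' => G.adj_symm h') (fun h' => h'.symm)

/-- The strong product `G ⊠ K_q`. -/
def strongProdK {α : Type} (G : SimpleGraph α) (q : ℕ) : SimpleGraph (α × Fin q) where
  Adj p r := G.Adj p.1 r.1 ∨ (p.1 = r.1 ∧ p.2 ≠ r.2)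
  symm := by
    constructor
    rintro p r (h | ⟨h1, h2⟩)
    · exact Or.inl h.symm
    · exact Or.inr ⟨h1.symm, h2.symm⟩
  loopless := by
    constructor
    rintro p (h | ⟨-, h2⟩)
    · exact G.irrefl h
    · exact h2 rfl

/-- The map `φ ↦ ((g,i) ↦ φ g)` is an injective graph homomorphism
`E_c(Γ_G) → E_c(G ⊠ K_q)`; consequently, restricting any (suited) proper `c`-coloring of
`E_c(G ⊠ K_q)` to the mappings constant on the cliques `{g} × K_q` yields a (suited)
proper `c`-coloring of `E_c(Γ_G)`. -/
theorem expGraph_lift_hom {α : Type} [Fintype α] (G : SimpleGraph α)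
    (q c : ℕ) (hq : 0 < q) (hc : 0 < c) :
    Function.Injective
        (fun (φ : α → Fin c) => (fun p : α × Fin q => φ p.1)) ∧
      (∀ φ ψ : α → Fin c,
        (expGraph (withLoops G) (withLoops_symm G) c).Adj φ ψ →
          (expGraph (strongProdK G q).Adj (fun _ _ h => (strongProdK G q).adj_symm h) c).Adj
            (fun p => φ p.1) (fun p => ψ p.1)) ∧
      ∀ Λ : (expGraph (strongProdK G q).Adj (fun _ _ h => (strongProdK G q).adj_symm h) c).Coloring (Fin c),
        (∀ φ ψ : α → Fin c,
          (expGraph (withLoops G) (withLoops_symm G) c).Adj φ ψ →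
            Λ (fun p => φ p.1) ≠ Λ (fun p => ψ p.1)) ∧
        ((∀ i : Fin c, Λ (Function.const (α × Fin q) i) = i) →
          ∀ i : Fin c, Λ (fun p => Function.const α i p.1) = i) := by
  have hom : ∀ φ ψ : α → Fin c,
      (expGraph (withLoops G) (withLoops_symm G) c).Adj φ ψ →
        (expGraph (strongProdK G q).Adj (fun _ _ h => (strongProdK G q).adj_symm h) c).Adj
          (fun p => φ p.1) (fun p => ψ p.1) := by
    rintro φ ψ ⟨hne, h⟩
    refine ⟨?_, ?_⟩
    · intro heq
      apply hne
      funext g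
      exact congrFun heq (g, ⟨0, hq⟩)
    · rintro ⟨x, i⟩ ⟨y, j⟩ (hxy | ⟨hxy, -⟩)
      · exact h x y (Or.inl hxy)
      · exact h x y (Or.inr hxy)
  refine ⟨?_, hom, fun Λ => ⟨fun φ ψ hadj => Λ.valid (hom φ ψ hadj), fun hs i => by
    have : (fun p : α × Fin q => Function.const α i p.1) = Function.const (α × Fin q) i := rfl
    rw [this]; exact hs i⟩⟩
  intro φ ψ heq
  funext g
  exact congrFun heq (g, ⟨0, hq⟩)
end

section
/- Let G be a finite simple graph, let v be a vertex of G, let q be a positive integer, let c ≥ 2q, and let σ, τ ∈ {2q+1,…,c} be distinct colors. Define μ_τ : V(G)×{1,…,q} → {1,…,c} by μ_τ(g,i) = i if dist(v,g) ∈ {0,2}, μ_τ(g,i) = q+i if dist(v,g) = 1, μ_τ(g,i) = τ if dist(v,g) ≥ 3; and define ν : V(G)×{1,…,q} → {1,…,c} by ν(g,i) = τ if g is in the closed neighborhood N(v), and ν(g,i) = σ if dist(v,g) ≥ 2. Then ν and μ_τ are adjacent vertices of the exponential graph E_c(G ⊠ K_q). -/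
/-- The mapping `μ_τ : V(G) × {1,…,q} → {1,…,c}` (0-indexed): `μ_τ (g,i) = i` if
`dist(v,g) ∈ {0,2}`, `μ_τ (g,i) = q + i` if `dist(v,g) = 1`, and `μ_τ (g,i) = τ` if
`dist(v,g) ≥ 3` (distance measured by `edist`). -/
noncomputable def mu {α : Type} (G : SimpleGraph α) (v : α) (q c : ℕ) (hc : 2 * q ≤ c)
    (t : Fin c) : α × Fin q → Fin c := fun p =>
  if G.edist v p.1 = 0 ∨ G.edist v p.1 = 2 then ⟨p.2.val, by have := p.2.isLt; omega⟩
  else if G.edist v p.1 = 1 then ⟨q + p.2.val, by have := p.2.isLt; omega⟩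
  else t

open scoped Classical in
/-- The mapping `ν : V(G) × {1,…,q} → {1,…,c}`: `ν (g,i) = τ` if `g` lies in the closed
neighborhood `N(v)`, and `ν (g,i) = σ` otherwise (i.e. when `dist(v,g) ≥ 2`). -/
noncomputable def nu {α : Type} (G : SimpleGraph α) (v : α) (q c : ℕ) (σ τ : Fin c) :
    α × Fin q → Fin c := fun p =>
  if p.1 = v ∨ G.Adj v p.1 then τ else σ

/-- For a finite simple graph `G`, a vertex `v`, `0 < q`, `2q ≤ c`, and distinct colors
`σ, τ ∈ {2q+1,…,c}` (0-indexed: `2q ≤ σ, τ`), the mappings `ν` and `μ_τ` are adjacent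
vertices of the exponential graph `E_c(G ⊠ K_q)`. -/
theorem nu_adj_mu {α : Type} [Fintype α] (G : SimpleGraph α) (v : α)
    (q c : ℕ) (hq : 0 < q) (hc : 2 * q ≤ c) (σ τ : Fin c)
    (hσ : 2 * q ≤ σ.val) (hτ : 2 * q ≤ τ.val) (hστ : σ ≠ τ) :
    (expGraph (strongProdK G q).Adj (fun ⦃_ _⦄ h => (strongProdK G q).adj_symm h) c).Adj
      (nu G v q c σ τ) (mu G v q c hc τ) := by
  classical
  constructor
  · intro h
    have h0 := congrFun h (v, ⟨0, hq⟩)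
    simp only [nu, mu, SimpleGraph.edist_self] at h0
    rw [if_pos (Or.inl trivial), if_pos (Or.inl trivial)] at h0
    have := congrArg Fin.val h0
    simp only [Fin.val_mk] at this
    omega
  · rintro x y hxy heq
    simp only [nu] at heq
    by_cases hx : x.1 = v ∨ G.Adj v x.1
    · -- ν x = τ, and edist v y.1 ≤ 2 so μ y has value < 2q
      rw [if_pos hx] at heq
      have h1 : G.edist v x.1 ≤ 1 := by
        rcases hx with h | h
        · rw [← h]; simp
        · rw [SimpleGraph.edist_eq_one_iff_adj.mpr h]
      have h2 : G.edist v y.1 ≤ 2 := by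
        rcases hxy with h | ⟨h, -⟩
        · calc G.edist v y.1 ≤ G.edist v x.1 + G.edist x.1 y.1 :=
                SimpleGraph.edist_triangle
            _ ≤ 1 + 1 := add_le_add h1
                (le_of_eq (SimpleGraph.edist_eq_one_iff_adj.mpr h))
            _ = 2 := by norm_num
        · rw [← h]; exact h1.trans (by norm_num)
      have hne : G.edist v y.1 ≠ ⊤ := by
        intro h; rw [h] at h2; exact absurd h2 (by simp)
      lift G.edist v y.1 to ℕ using hne with n hn
      have hn2 : n ≤ 2 := by exact_mod_cast h2
      have hcases : (n : ℕ∞) = 0 ∨ (n : ℕ∞) = 1 ∨ (n : ℕ∞) = 2 := by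
        interval_cases n <;> norm_num
      have hval : (mu G v q c hc τ y).val < 2 * q := by
        simp only [mu, ← hn]
        rcases hcases with h | h | h
        · rw [if_pos (Or.inl h)]; simp only [Fin.val_mk]; have := y.2.isLt; omega
        · rw [if_neg (by rw [h]; norm_num), if_pos h]; simp only [Fin.val_mk]
          have := y.2.isLt; omega
        · rw [if_pos (Or.inr h)]; simp only [Fin.val_mk]; have := y.2.isLt; omega
      rw [← heq] at hval; omega
    · rw [if_neg hx] at heq
      -- ν x = σ; μ y is either < 2q ≤ σ, or = τ ≠ σ
      simp only [mu] at heq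
      split_ifs at heq with h1 h2
      · have := congrArg Fin.val heq; simp only [Fin.val_mk] at this
        have := y.2.isLt; omega
      · have := congrArg Fin.val heq; simp only [Fin.val_mk] at this
        have := y.2.isLt; omega
      · exact hστ heq
end
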